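/- arXiv:1808.07747 — 2 statements merged into one kernel-verified Lean document; each statement's English description precedes it below -/
import Mathlib

section
/- If X_i = a·𝟙 and X_j = a'·𝟙 are P × MN matrices with all entries equal to a and a' respectively, with a ≠ a', then the minimum over all pairs (i,j), i ≠ j, of rank(X_i − X_j) over any set of symbol matrices containing X_i and X_j is equal to one. Consequently, the asymptotic diversity order min_{i≠j} rank(Δ_ij) of uncoded OTFS equals one. -/
namespace Matrix

variable {m n R : Type*} [Fintype n]

theorem one_le_rank_of_ne_zero [Field R] {A : Matrix m n R}
    (hA : A ≠ 0) : 1 ≤ A.rank := by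
  rw [rank, Submodule.one_le_finrank_iff, Ne, LinearMap.range_eq_bot]
  exact fun h => hA (mulVec_injective (congrArg DFunLike.coe (h.trans mulVecLin_zero.symm)))

theorem rank_of_const [Field R] [Nonempty m] [Nonempty n] {c : R} (hc : c ≠ 0) :
    (of fun (_ : m) (_ : n) => c).rank = 1 := by
  have h_vecMulVec : (of fun (_ : m) (_ : n) => c) = vecMulVec (fun _ => c) (fun _ => 1) := by
    ext; simp [vecMulVec]
  have h_ne_zero : (of fun (_ : m) (_ : n) => c) ≠ 0 := fun h =>
    hc (congrFun (congrFun h (Classical.arbitrary m)) (Classical.arbitrary n))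
  exact le_antisymm (h_vecMulVec ▸ rank_vecMulVec_le _ _) (one_le_rank_of_ne_zero h_ne_zero)

end Matrix

open Matrix in
theorem sInf_rank_sub_eq_one {m n R : Type*} [Fintype n] [Field R]
    {S : Set (Matrix m n R)} {X Y : Matrix m n R} (hX : X ∈ S) (hY : Y ∈ S)
    (hXY : (X - Y).rank = 1) :
    sInf {r : ℕ | ∃ X ∈ S, ∃ Y ∈ S, X ≠ Y ∧ r = (X - Y).rank} = 1 := by
  refine IsLeast.csInf_eq ⟨⟨X, hX, Y, hY, ?_, hXY.symm⟩, ?_⟩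
  · rintro rfl
    simp at hXY
  · rintro r ⟨X, -, Y, -, hne, rfl⟩
    exact one_le_rank_of_ne_zero (sub_ne_zero.mpr hne)

/-- If the set `S` of OTFS symbol matrices (P × MN complex matrices) contains the
two constant matrices `a·𝟙` and `a'·𝟙` with `a ≠ a'`, then the minimum over all
pairs of distinct symbol matrices of the rank of their difference equals one,
i.e. the asymptotic diversity order of uncoded OTFS is one. -/
theorem otfs_asymptotic_diversity_order_eq_one (P M N : ℕ) (hP : 0 < P) (hM : 0 < M)
    (hN : 0 < N) (a a' : ℂ) (ha : a ≠ a')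
    (S : Set (Matrix (Fin P) (Fin (M * N)) ℂ))
    (hA : (Matrix.of fun _ _ => a) ∈ S) (hB : (Matrix.of fun _ _ => a') ∈ S) :
    sInf {r : ℕ | ∃ X ∈ S, ∃ Y ∈ S, X ≠ Y ∧ r = (X - Y).rank} = 1 := by
  have : Nonempty (Fin P) := Fin.pos_iff_nonempty.mp hP
  have : Nonempty (Fin (M * N)) := Fin.pos_iff_nonempty.mp (Nat.mul_pos hM hN)
  have h_sub : (Matrix.of fun _ _ => a) - (Matrix.of fun _ _ => a') =
      (Matrix.of fun (_ : Fin P) (_ : Fin (M * N)) => a - a') := by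
    ext; simp
  exact sInf_rank_sub_eq_one hA hB (h_sub ▸ Matrix.rank_of_const (sub_ne_zero.mpr ha))
end

section
/- For the MIMO-OTFS system with n_t transmit and n_r receive antennas, taking X_{k,i} = a·𝟙_{P×MN} and X_{k,j} = a'·𝟙_{P×MN} for distinct symbols a ≠ a' gives a rank-one per-antenna difference matrix Δ_{k,ij}; hence the asymptotic diversity order n_r · min_{i≠j} rank(Δ_{k,ij}) of MIMO-OTFS equals n_r. -/
/-- A nonzero matrix over ℂ has positive rank. -/
lemma rank_pos_of_ne_zero {m n : ℕ} (A : Matrix (Fin m) (Fin n) ℂ) (hA : A ≠ 0) :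
    0 < A.rank := by
  rw [Matrix.rank, pos_iff_ne_zero]
  intro h
  rw [Submodule.finrank_eq_zero] at h
  apply hA
  ext i j
  have hmv : A.mulVec (Pi.single j 1) = 0 := by
    have : A.mulVecLin (Pi.single j 1) ∈ LinearMap.range A.mulVecLin :=
      LinearMap.mem_range_self _ _
    rw [h, Submodule.mem_bot] at this
    exact this
  have := congrFun hmv i
  simpa [Matrix.mulVec_single] using this

/-- The constant matrix with nonzero entry `c` has rank 1. -/
lemma rank_const_eq_one {m n : ℕ} (hm : 0 < m) (hn : 0 < n) (c : ℂ) (hc : c ≠ 0) :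
    (Matrix.of fun (_ : Fin m) (_ : Fin n) => c).rank = 1 := by
  rw [Matrix.rank_eq_finrank_span_cols]
  show Module.finrank ℂ (Submodule.span ℂ (Set.range (Matrix.of fun (_ : Fin m) (_ : Fin n) => c).transpose)) = 1
  have hrange : Set.range (Matrix.of fun (_ : Fin m) (_ : Fin n) => c).transpose
      = {fun _ : Fin m => c} := by
    ext v
    constructor
    · rintro ⟨j, rfl⟩; rfl
    · rintro rfl; exact ⟨⟨0, hn⟩, rfl⟩
  rw [hrange]
  have hne : (fun _ : Fin m => c) ≠ 0 := by
    intro h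
    exact hc (congrFun h ⟨0, hm⟩)
  simpa using finrank_span_singleton hne

/-- MIMO-OTFS asymptotic diversity: if the set `S` of per-antenna OTFS symbol
matrices contains the constant matrices `a·𝟙_{P×MN}` and `a'·𝟙_{P×MN}` with
`a ≠ a'` (a rank-one difference), then the asymptotic diversity order
`n_r · min_{i≠j} rank(Δ_{k,ij})` of MIMO-OTFS equals `n_r`. -/
theorem mimo_otfs_asymptotic_diversity_order (P M N nr : ℕ) (hP : 0 < P)
    (hM : 0 < M) (hN : 0 < N) (hnr : 0 < nr) (a a' : ℂ) (ha : a ≠ a')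
    (S : Set (Matrix (Fin P) (Fin (M * N)) ℂ))
    (hA : (Matrix.of fun _ _ => a) ∈ S) (hB : (Matrix.of fun _ _ => a') ∈ S) :
    nr * sInf {r : ℕ | ∃ X ∈ S, ∃ Y ∈ S, X ≠ Y ∧ r = (X - Y).rank} = nr := by
  have hMN : 0 < M * N := Nat.mul_pos hM hN
  have hdiff : (Matrix.of fun (_ : Fin P) (_ : Fin (M * N)) => a)
      - (Matrix.of fun _ _ => a') = Matrix.of fun _ _ => (a - a') := by
    ext i j; simp [Matrix.sub_apply]
  have h1 : (1 : ℕ) ∈ {r : ℕ | ∃ X ∈ S, ∃ Y ∈ S, X ≠ Y ∧ r = (X - Y).rank} := by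
    refine ⟨_, hA, _, hB, ?_, ?_⟩
    · intro h
      exact ha (congrFun (congrFun (Matrix.of.symm.injective h) ⟨0, hP⟩) ⟨0, hMN⟩)
    · rw [hdiff, rank_const_eq_one hP hMN _ (sub_ne_zero.mpr ha)]
  have hlb : ∀ r ∈ {r : ℕ | ∃ X ∈ S, ∃ Y ∈ S, X ≠ Y ∧ r = (X - Y).rank}, 1 ≤ r := by
    rintro r ⟨X, _, Y, _, hXY, rfl⟩
    exact rank_pos_of_ne_zero _ (sub_ne_zero.mpr hXY)
  have : sInf {r : ℕ | ∃ X ∈ S, ∃ Y ∈ S, X ≠ Y ∧ r = (X - Y).rank} = 1 :=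
    le_antisymm (Nat.sInf_le h1) (le_csInf ⟨1, h1⟩ hlb)
  rw [this, mul_one]
end
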